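/- arXiv:1903.05964 — 3 statements merged into one kernel-verified Lean document; each statement's English description precedes it below -/
import Mathlib

section
/- For every real number α with 0 < α < 1 and every x ≥ 0, one has (αe)^{-1/α} · e^{x^α} - x ≥ 0. -/
/-!
Both sides are nonnegative, so the inequality `x ≤ (α e)^(-1/α) e^(x^α)` may be raised to the
power `α`. With `t = α x^α` it then reads `e t ≤ e^t`: the exponential lies above its tangent
line at `t = 1`.
-/

open Real

theorem le_rpow_neg_one_div_mul_exp_rpow {α x : ℝ} (hα : 0 < α) (hx : 0 ≤ x) :
    x ≤ (α * exp 1) ^ (-(1 / α)) * exp (x ^ α) := by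
  have hαe : 0 < α * exp 1 := by positivity
  have hrhs : ((α * exp 1) ^ (-(1 / α)) * exp (x ^ α)) ^ α = (α * exp 1)⁻¹ * exp (α * x ^ α) := by
    rw [mul_rpow (by positivity) (exp_pos _).le, ← rpow_mul hαe.le, ← exp_mul,
      neg_mul, one_div, inv_mul_cancel₀ hα.ne', rpow_neg_one, mul_comm (x ^ α)]
  rw [← rpow_le_rpow_iff hx (by positivity) hα, hrhs, le_inv_mul_iff₀ hαe, mul_comm α,
    mul_assoc]
  exact exp_one_mul_le_exp

theorem stmt_0_general (α x : ℝ) (hα : 0 < α) (hx : 0 ≤ x) :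
    0 ≤ (α * Real.exp 1) ^ (-(1 / α)) * Real.exp (x ^ α) - x :=
  sub_nonneg.2 (le_rpow_neg_one_div_mul_exp_rpow hα hx)

theorem stmt_0 (α x : ℝ) (hα : 0 < α) (hα1 : α < 1) (hx : 0 ≤ x) :
    0 ≤ (α * Real.exp 1) ^ (-(1 / α)) * Real.exp (x ^ α) - x :=
  stmt_0_general α x hα hx
end

section
/- Let A be a symmetric d-tensor A = (a_{i₁…i_d}) on [n]^d, q ≥ 2, and let e_q(A) be the qd-tensor with (e_q(A))_{i₁…i_{qd}} = a_{i₁ i_{q+1} … i_{(d−1)q+1}} if within each consecutive block of q indices all indices coincide, and 0 otherwise. Then the injective norm sup{ |⟨e_q(A), x¹ ⊗ ⋯ ⊗ x^{qd}⟩| : ‖x^j‖₂ ≤ 1 for all j } equals max_{i₁,…,i_d} |a_{i₁…i_d}|. -/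
/-!
Since `e_q(A)` vanishes off block-constant indices, `⟨e_q(A), x¹ ⊗ ⋯ ⊗ x^{qd}⟩` equals
`∑ᵢ a_i ∏ₖ ∏ⱼ x^{k,j}_{iₖ}`, whose absolute value is at most `max |a_i|` times
`∏ₖ ∑ᵣ ∏ⱼ |x^{k,j}_r|`. In each block, bounding all but two factors by `1` and applying
Cauchy–Schwarz to the remaining two shows `∑ᵣ ∏ⱼ |x^{k,j}_r| ≤ 1`; this is where `q ≥ 2`
enters. Putting the standard basis vector `e_{i₀ k}` in every slot of block `k`, for a maximiser
`i₀`, attains the bound.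
-/

open Finset

variable {ι κ α : Type*} [Fintype ι] [Fintype κ] [Fintype α]

theorem sum_ite_blockConst_mul_prod [DecidableEq ι] [DecidableEq κ] [DecidableEq α] (j₀ : κ)
    (A : (ι → α) → ℝ) (x : ι × κ → α → ℝ) :
    ∑ m : ι × κ → α,
        (if ∀ p : ι × κ, m p = m (p.1, j₀) then A (fun k => m (k, j₀)) else 0) *
          ∏ p, x p (m p)
      = ∑ i : ι → α, A i * ∏ p : ι × κ, x p (i p.1) := by
  simp only [ite_mul, zero_mul]
  rw [← sum_filter]
  refine sum_nbij' (fun m k => m (k, j₀)) (fun i p => i p.1) (by simp) (by simp) ?_ (by simp) ?_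
  · intro m hm
    funext p
    exact ((mem_filter.mp hm).2 p).symm
  · intro m hm
    have hm : ∀ p, m p = m (p.1, j₀) := (mem_filter.mp hm).2
    simp only [← hm]

theorem abs_le_one_of_sqrt_sum_sq_le_one {f : α → ℝ} (hf : √(∑ r, f r ^ 2) ≤ 1) (r : α) :
    |f r| ≤ 1 := by
  rw [← Real.sqrt_sq_eq_abs]
  exact (Real.sqrt_le_sqrt (single_le_sum (fun i _ => sq_nonneg (f i)) (mem_univ r))).trans hf

theorem sum_prod_abs_le_one [Nontrivial κ] (y : κ → α → ℝ) (hy : ∀ j, √(∑ r, y j r ^ 2) ≤ 1) :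
    ∑ r, ∏ j, |y j r| ≤ 1 := by
  classical
  obtain ⟨j₀, j₁, hne⟩ := exists_pair_ne κ
  have hpair : ∀ r, ∏ j, |y j r| ≤ |y j₀ r| * |y j₁ r| := by
    intro r
    rw [← prod_sdiff (subset_univ {j₀, j₁}), prod_pair hne]
    refine mul_le_of_le_one_left (by positivity) (prod_le_one (fun _ _ => abs_nonneg _) ?_)
    exact fun j _ => abs_le_one_of_sqrt_sum_sq_le_one (hy j) r
  calc ∑ r, ∏ j, |y j r|
      ≤ ∑ r, |y j₀ r| * |y j₁ r| := sum_le_sum fun r _ => hpair r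
    _ ≤ √(∑ r, |y j₀ r| ^ 2) * √(∑ r, |y j₁ r| ^ 2) := Real.sum_mul_le_sqrt_mul_sqrt _ _ _
    _ ≤ 1 := by
      simp only [sq_abs]
      exact mul_le_one₀ (hy j₀) (Real.sqrt_nonneg _) (hy j₁)

theorem sum_prod_abs_blockConst_le_one [DecidableEq ι] [Nontrivial κ] (x : ι × κ → α → ℝ)
    (hx : ∀ p, √(∑ r, x p r ^ 2) ≤ 1) :
    ∑ i : ι → α, ∏ p : ι × κ, |x p (i p.1)| ≤ 1 := by
  calc ∑ i : ι → α, ∏ p : ι × κ, |x p (i p.1)|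
      = ∏ k, ∑ r, ∏ j, |x (k, j) r| := by
        simp only [Fintype.prod_prod_type, Fintype.prod_sum]
    _ ≤ ∏ _k : ι, (1 : ℝ) :=
        prod_le_prod (fun _ _ => by positivity)
          fun k _ => sum_prod_abs_le_one (fun j => x (k, j)) fun j => hx (k, j)
    _ = 1 := prod_const_one

theorem abs_sum_mul_prod_le_iSup [DecidableEq ι] [Nontrivial κ] (A : (ι → α) → ℝ)
    (x : ι × κ → α → ℝ) (hx : ∀ p, √(∑ r, x p r ^ 2) ≤ 1) :
    |∑ i : ι → α, A i * ∏ p : ι × κ, x p (i p.1)| ≤ ⨆ i, |A i| := by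
  set M := ⨆ i, |A i|
  have hA : ∀ i, |A i| ≤ M := le_ciSup (Finite.bddAbove_range fun i => |A i|)
  calc |∑ i : ι → α, A i * ∏ p : ι × κ, x p (i p.1)|
      ≤ ∑ i : ι → α, |A i| * ∏ p : ι × κ, |x p (i p.1)| := by
        simpa only [abs_mul, abs_prod] using
          abs_sum_le_sum_abs (fun i => A i * ∏ p : ι × κ, x p (i p.1)) univ
    _ ≤ ∑ i : ι → α, M * ∏ p : ι × κ, |x p (i p.1)| :=
        sum_le_sum fun i _ => mul_le_mul_of_nonneg_right (hA i) (by positivity)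
    _ = M * ∑ i : ι → α, ∏ p : ι × κ, |x p (i p.1)| := (mul_sum _ _ _).symm
    _ ≤ M := mul_le_of_le_one_right (Real.iSup_nonneg fun _ => abs_nonneg _)
        (sum_prod_abs_blockConst_le_one x hx)

theorem sum_mul_prod_basisVector [DecidableEq ι] [DecidableEq α] [Nonempty κ]
    (A : (ι → α) → ℝ) (i₀ : ι → α) :
    ∑ i : ι → α, A i * ∏ p : ι × κ, (if i p.1 = i₀ p.1 then 1 else 0 : ℝ) = A i₀ := by
  obtain ⟨j⟩ := ‹Nonempty κ›
  rw [sum_eq_single i₀ _ (by simp)]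
  · simp
  · intro i _ hi
    obtain ⟨k, hk⟩ := Function.ne_iff.mp hi
    rw [prod_eq_zero (mem_univ (k, j)) (if_neg hk), mul_zero]

theorem isGreatest_abs_sum_mul_prod [DecidableEq ι] [DecidableEq α] [Nontrivial κ]
    (A : (ι → α) → ℝ) :
    IsGreatest {c : ℝ | ∃ x : ι × κ → α → ℝ, (∀ p, √(∑ r, x p r ^ 2) ≤ 1) ∧
        c = |∑ i : ι → α, A i * ∏ p : ι × κ, x p (i p.1)|} (⨆ i, |A i|) := by
  refine ⟨?_, fun c ⟨x, hx, hc⟩ => hc ▸ abs_sum_mul_prod_le_iSup A x hx⟩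
  cases isEmpty_or_nonempty (ι → α) with
  | inl hempty =>
    refine ⟨0, fun _ => by simp, ?_⟩
    simp [Real.iSup_of_isEmpty]
  | inr hne =>
    obtain ⟨i₀, hi₀⟩ := Finite.exists_max fun i => |A i|
    refine ⟨fun p r => if r = i₀ p.1 then 1 else 0, fun p => by simp, ?_⟩
    rw [sum_mul_prod_basisVector, le_antisymm (ciSup_le hi₀) 
      (le_ciSup (Finite.bddAbove_range fun i => |A i|) i₀)]

theorem stmt_18 (n d q : ℕ) (hq : 2 ≤ q) (A : (Fin d → Fin n) → ℝ) :
    sSup {c : ℝ | ∃ x : Fin d × Fin q → Fin n → ℝ,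
        (∀ p, Real.sqrt (∑ r, x p r ^ 2) ≤ 1) ∧
        c = |∑ m : Fin d × Fin q → Fin n,
              (if ∀ p : Fin d × Fin q, m p = m (p.1, ⟨0, by omega⟩)
                then A (fun k => m (k, ⟨0, by omega⟩)) else 0) * ∏ p, x p (m p)|}
      = ⨆ i : Fin d → Fin n, |A i| := by
  have : Nontrivial (Fin q) := Fin.nontrivial_iff_two_le.mpr hq
  simp only [sum_ite_blockConst_mul_prod]
  exact (isGreatest_abs_sum_mul_prod A).csSup_eq
end

section
/- Assume a real random variable Z satisfies ‖Z − E Z‖_p ≤ Σ_{k=1}^d (C_k p)^{k/2} for all p ≥ 2, with constants C₁, …, C_d ≥ 0. Let L be the number of indices k with C_k > 0 and r the smallest such index. Then for all t > 0, P(|Z − E Z| ≥ t) ≤ 2 exp( −(log 2)/(2(Le)^{2/r}) · min_{k=1,…,d} t^{2/k}/C_k ). -/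
set_option maxHeartbeats 1000000


open MeasureTheory

theorem stmt_19 {Ω : Type*} [MeasurableSpace Ω] (μ : Measure Ω) [IsProbabilityMeasure μ]
    (d : ℕ) (Z : Ω → ℝ) (hZm : Measurable Z) (hZint : Integrable Z μ)
    (C : Fin d → ℝ) (hC : ∀ k, 0 ≤ C k)
    (hmom : ∀ p : ℝ, 2 ≤ p →
      (∫⁻ ω, ENNReal.ofReal (|Z ω - ∫ x, Z x ∂μ| ^ p) ∂μ) ^ (1 / p)
        ≤ ENNReal.ofReal (∑ k, (C k * p) ^ (((k : ℕ) + 1 : ℝ) / 2)))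
    (hne : (Finset.univ.filter fun k : Fin d => 0 < C k).Nonempty)
    (t : ℝ) (ht : 0 < t) :
    μ {ω | t ≤ |Z ω - ∫ x, Z x ∂μ|}
      ≤ ENNReal.ofReal (2 * Real.exp (-(Real.log 2 /
          (2 * ((((Finset.univ.filter fun k : Fin d => 0 < C k).card : ℝ) * Real.exp 1)
            ^ (2 / ((((Finset.univ.filter fun k : Fin d => 0 < C k).min' hne : Fin d) : ℕ)
                + 1 : ℝ)))))
          * ((Finset.univ.filter fun k : Fin d => 0 < C k).inf' hne
              fun k => t ^ (2 / ((k : ℕ) + 1 : ℝ)) / C k))) := by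
  classical
  set c0 := ∫ x, Z x ∂μ with hc0
  set S := Finset.univ.filter fun k : Fin d => 0 < C k with hSdef
  set L : ℝ := (S.card : ℝ) with hLdef
  set r : ℝ := (((S.min' hne : Fin d) : ℕ) : ℝ) with hrdef
  set E : ℝ := Real.exp 1 with hEdef
  set m : ℝ := S.inf' hne (fun k => t ^ (2 / ((k : ℕ) + 1 : ℝ)) / C k) with hmdef
  set X : ℝ := (L * E) ^ (2 / (r + 1)) with hXdef
  have hE1 : (1 : ℝ) < E := by
    have := Real.add_one_le_exp (1 : ℝ); simp only [hEdef]; linarith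
  have hL1 : (1 : ℝ) ≤ L := by
    have h : 1 ≤ S.card := Finset.card_pos.mpr hne
    rw [hLdef]; exact_mod_cast h
  have hLE : (1 : ℝ) ≤ L * E := by nlinarith
  have hLE0 : (0 : ℝ) < L * E := by linarith
  have hr0 : (0 : ℝ) ≤ r := by positivity
  have hr1 : (0 : ℝ) < r + 1 := by linarith
  have hX1 : (1 : ℝ) ≤ X := by
    have h := Real.rpow_le_rpow_of_exponent_le hLE
      (show (0:ℝ) ≤ 2 / (r + 1) by positivity)
    rw [Real.rpow_zero] at h
    exact h
  have hX0 : (0 : ℝ) < X := by linarith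
  have hm0 : (0 : ℝ) < m := by
    rw [hmdef]
    rw [Finset.lt_inf'_iff]
    intro k hk
    have hCk : 0 < C k := (Finset.mem_filter.mp hk).2
    have : (0:ℝ) < t ^ (2 / ((k : ℕ) + 1 : ℝ)) := Real.rpow_pos_of_pos ht _
    positivity
  set p : ℝ := m / X with hpdef
  have hp0 : (0 : ℝ) < p := by positivity
  have hmpX : m = p * X := by rw [hpdef, div_mul_cancel₀ m hX0.ne']
  have hlog2 : (0 : ℝ) < Real.log 2 := Real.log_pos (by norm_num)
  have hlog2' : Real.log 2 < 1 := by
    have := Real.log_two_lt_d9; linarith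
  have hexpform : -(Real.log 2 / (2 * X)) * m = -(Real.log 2 / 2 * p) := by
    rw [hmpX]; field_simp
  by_cases hp2 : 2 ≤ p
  · -- main case: Markov at exponent p
    -- sum bound
    have hterm : ∀ k ∈ S, (C k * p) ^ (((k : ℕ) + 1 : ℝ) / 2) ≤ t / (L * E) := by
      intro k hk
      have hCk : 0 < C k := (Finset.mem_filter.mp hk).2
      set a : ℝ := ((k : ℕ) + 1 : ℝ) with hadef
      have ha1 : r + 1 ≤ a := by
        have hle : S.min' hne ≤ k := Finset.min'_le S k hk
        have h2 : ((S.min' hne : Fin d) : ℕ) ≤ (k : ℕ) := hle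
        have : r ≤ ((k : ℕ) : ℝ) := by rw [hrdef]; exact_mod_cast h2
        simp only [hadef]; linarith
      have ha0 : (0 : ℝ) < a := by linarith
      have h1 : C k * m ≤ t ^ (2 / a) := by
        have hinf : m ≤ t ^ (2 / a) / C k := Finset.inf'_le _ hk
        rw [le_div_iff₀ hCk] at hinf
        linarith [hinf, mul_comm m (C k)]
      have h2 : C k * p ≤ t ^ (2 / a) / X := by
        rw [hpdef, mul_div_assoc']
        exact div_le_div_of_nonneg_right h1 hX0.le
      have hbase0 : (0 : ℝ) ≤ C k * p := mul_nonneg hCk.le hp0.le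
      calc (C k * p) ^ (a / 2)
          ≤ (t ^ (2 / a) / X) ^ (a / 2) :=
            Real.rpow_le_rpow hbase0 h2 (by positivity)
        _ = t / X ^ (a / 2) := by
            rw [Real.div_rpow (Real.rpow_nonneg ht.le _) hX0.le,
              ← Real.rpow_mul ht.le]
            congr 1
            rw [show 2 / a * (a / 2) = 1 by field_simp, Real.rpow_one]
        _ ≤ t / (L * E) := by
            have hXa : L * E ≤ X ^ (a / 2) := by
              rw [hXdef, ← Real.rpow_mul hLE0.le]
              have : (1 : ℝ) ≤ 2 / (r + 1) * (a / 2) := by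
                rw [show 2 / (r + 1) * (a / 2) = a / (r + 1) by field_simp]
                rw [le_div_iff₀ hr1]; linarith
              have h := Real.rpow_le_rpow_of_exponent_le hLE this
              rwa [Real.rpow_one] at h
            exact div_le_div_of_nonneg_left ht.le hLE0 hXa
    have hsum : ∑ k, (C k * p) ^ (((k : ℕ) + 1 : ℝ) / 2) ≤ t / E := by
      have hzero : ∀ k ∈ Finset.univ, k ∉ S → (C k * p) ^ (((k : ℕ) + 1 : ℝ) / 2) = 0 := by
        intro k _ hk
        have : ¬ 0 < C k := by
          intro h; exact hk (Finset.mem_filter.mpr ⟨Finset.mem_univ k, h⟩)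
        have hCk0 : C k = 0 := le_antisymm (not_lt.mp this) (hC k)
        rw [hCk0, zero_mul, Real.zero_rpow]
        positivity
      rw [← Finset.sum_subset (Finset.subset_univ S) hzero]
      calc ∑ k ∈ S, (C k * p) ^ (((k : ℕ) + 1 : ℝ) / 2)
          ≤ S.card • (t / (L * E)) := Finset.sum_le_card_nsmul S _ _ hterm
        _ = L * (t / (L * E)) := by rw [nsmul_eq_mul]
        _ = t / E := by
            have hL0 : L ≠ 0 := by linarith
            have hE0 : E ≠ 0 := by linarith
            field_simp
    -- moment bound gives lintegral bound
    have hmomp := hmom p hp2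
    have hI : (∫⁻ ω, ENNReal.ofReal (|Z ω - c0| ^ p) ∂μ) ≤ ENNReal.ofReal ((t / E) ^ p) := by
      have h1 : (∫⁻ ω, ENNReal.ofReal (|Z ω - c0| ^ p) ∂μ) ^ (1 / p)
          ≤ ENNReal.ofReal (t / E) :=
        hmomp.trans (ENNReal.ofReal_le_ofReal hsum)
      have h2 := ENNReal.rpow_le_rpow h1 hp0.le
      rw [← ENNReal.rpow_mul, one_div_mul_cancel hp0.ne', ENNReal.rpow_one] at h2
      rwa [ENNReal.ofReal_rpow_of_nonneg (by positivity) hp0.le] at h2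
    -- Markov
    have hmeas : Measurable fun ω => ENNReal.ofReal (|Z ω - c0| ^ p) :=
      (((hZm.sub measurable_const).abs.pow measurable_const).ennreal_ofReal)
    have hsub : {ω | t ≤ |Z ω - c0|}
        ⊆ {ω | ENNReal.ofReal (t ^ p) ≤ ENNReal.ofReal (|Z ω - c0| ^ p)} := by
      intro ω hω
      exact ENNReal.ofReal_le_ofReal (Real.rpow_le_rpow ht.le hω hp0.le)
    have hmar := mul_meas_ge_le_lintegral₀ (μ := μ) hmeas.aemeasurable (ENNReal.ofReal (t ^ p))
    have htp : (0 : ℝ) < t ^ p := Real.rpow_pos_of_pos ht p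
    have hfinal : (t / E) ^ p / t ^ p ≤ 2 * Real.exp (-(Real.log 2 / (2 * X)) * m) := by
      have hE0 : (0 : ℝ) < E := by linarith
      have hEp : E ^ p = Real.exp p := Real.exp_one_rpow p
      rw [Real.div_rpow ht.le hE0.le, hEp]
      rw [div_div, mul_comm, ← div_div, div_self htp.ne']
      rw [one_div, ← Real.exp_neg]
      rw [hexpform]
      have h1 : Real.exp (-p) ≤ Real.exp (-(Real.log 2 / 2 * p)) := by
        apply Real.exp_le_exp.mpr
        nlinarith
      nlinarith [Real.exp_pos (-(Real.log 2 / 2 * p))]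
    calc μ {ω | t ≤ |Z ω - c0|}
        ≤ μ {ω | ENNReal.ofReal (t ^ p) ≤ ENNReal.ofReal (|Z ω - c0| ^ p)} :=
          measure_mono hsub
      _ ≤ ENNReal.ofReal ((t / E) ^ p) / ENNReal.ofReal (t ^ p) := by
          rw [ENNReal.le_div_iff_mul_le (Or.inl (by simp [htp])) (Or.inl ENNReal.ofReal_ne_top)]
          rw [mul_comm]
          exact hmar.trans hI
      _ = ENNReal.ofReal ((t / E) ^ p / t ^ p) := (ENNReal.ofReal_div_of_pos htp).symm
      _ ≤ ENNReal.ofReal (2 * Real.exp (-(Real.log 2 / (2 * X)) * m)) :=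
          ENNReal.ofReal_le_ofReal hfinal
  · -- trivial case
    push_neg at hp2
    have h1 : (1 : ℝ) ≤ 2 * Real.exp (-(Real.log 2 / (2 * X)) * m) := by
      rw [hexpform]
      have : Real.exp (-Real.log 2) ≤ Real.exp (-(Real.log 2 / 2 * p)) := by
        apply Real.exp_le_exp.mpr
        nlinarith
      rw [Real.exp_neg, Real.exp_log (by norm_num : (0:ℝ) < 2)] at this
      nlinarith
    calc μ {ω | t ≤ |Z ω - c0|} ≤ 1 := prob_le_one
      _ = ENNReal.ofReal 1 := ENNReal.ofReal_one.symm
      _ ≤ ENNReal.ofReal (2 * Real.exp (-(Real.log 2 / (2 * X)) * m)) :=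
          ENNReal.ofReal_le_ofReal h1
end
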